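/- arXiv:1409.3127 — 8 statements merged into one kernel-verified Lean document; each statement's English description precedes it below -/
import Mathlib

section
/- For integers 2 ≤ n ≤ N, the N-dimensional cube I^N has exactly binomial(N, n−1) absolutely incoming (n−1)-faces, and exactly binomial(N, n−1) absolutely outgoing (n−1)-faces. -/
/-- A face of the `N`-dimensional cube `I^N`, encoded as a function assigning to each
coordinate position either a digit (`some false` = 0, `some true` = 1) or an
asterisk (`none`). -/
abbrev CubeFace (N : ℕ) := Fin N → Option Bool

/-- `τ` is a `k`-face: exactly `k` positions carry an asterisk. -/
def IsFace {N : ℕ} (k : ℕ) (τ : CubeFace N) : Prop :=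
  (Finset.filter (fun i => τ i = none) Finset.univ).card = k

/-- The digit `κ` associated to the asterisk position `p` of `f`: if `p` is the `k`-th
asterisk position of `f` (counting 1-based from the left), then `κ = 0` (i.e. `false`)
for odd `k` and `κ = 1` (i.e. `true`) for even `k`.  Equivalently, `κ` is `true` iff the
number of asterisk positions strictly before `p` is odd. -/
def kappa {N : ℕ} (f : CubeFace N) (p : Fin N) : Bool :=
  decide (Odd ((Finset.filter (fun q => q < p ∧ f q = none) Finset.univ).card))

/-- `g` is obtained from `f` by replacing the asterisk at position `p` by the digit `d`. -/
def SubfaceAt {N : ℕ} (f g : CubeFace N) (p : Fin N) (d : Bool) : Prop :=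
  f p = none ∧ g p = some d ∧ ∀ q, q ≠ p → g q = f q

/-- `g` is an incoming subface of `f`: it is obtained from `f` by replacing the asterisk
at some position `p` by the digit `κ(f, p)`. -/
def Incoming {N : ℕ} (f g : CubeFace N) : Prop := ∃ p, SubfaceAt f g p (kappa f p)

/-- `g` is an outgoing subface of `f`: it is obtained from `f` by replacing the asterisk
at some position `p` by the digit different from `κ(f, p)`. -/
def Outgoing {N : ℕ} (f g : CubeFace N) : Prop := ∃ p, SubfaceAt f g p (!kappa f p)

/-- The order of a face `g`: the number of `n`-faces of the cube for which `g` is an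
incoming subface. -/
noncomputable def faceOrder {N : ℕ} (n : ℕ) (g : CubeFace N) : ℕ :=
  Nat.card {f : CubeFace N // IsFace n f ∧ Incoming f g}

/-!
Restoring the asterisk at a digit position `p` of an `(n-1)`-face `g` gives the unique
`n`-face having `g` as a subface at `p`, and `κ` at `p` is the same for both, since it only
sees the asterisks left of `p`. Hence the order of `g` is the number of digit positions `p`
with `g p = κ(g, p)`: `g` is absolutely incoming iff every digit is its `κ`, and absolutely
outgoing iff every digit is the opposite of its `κ`. A face of either kind is determined by
its set of asterisk positions, which can be any `(n-1)`-subset of the `N` positions.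
-/

open Finset

namespace CubeFace

variable {N : ℕ}

def asterisks (g : CubeFace N) : Finset (Fin N) := univ.filter (g · = none)

lemma isFace_iff_card_asterisks {k : ℕ} {g : CubeFace N} :
    IsFace k g ↔ (asterisks g).card = k := Iff.rfl

lemma card_compl_asterisks {k : ℕ} {g : CubeFace N} (hg : IsFace k g) :
    (asterisks g)ᶜ.card = N - k := by
  rw [card_compl, Fintype.card_fin, ← isFace_iff_card_asterisks.mp hg]

lemma mem_asterisks {g : CubeFace N} {p : Fin N} : p ∈ asterisks g ↔ g p = none := by
  simp [asterisks]

lemma kappa_eq (g : CubeFace N) (p : Fin N) :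
    kappa g p = decide (Odd ((asterisks g).filter (· < p)).card) := by
  unfold kappa
  congr 3
  ext q
  simp [mem_asterisks, and_comm]

lemma kappa_congr {f g : CubeFace N} {p : Fin N} (h : ∀ q < p, f q = g q) :
    kappa f p = kappa g p := by
  unfold kappa
  congr 3
  ext q
  simp only [mem_filter, mem_univ, true_and]
  exact and_congr_right fun hq => by rw [h q hq]

lemma kappa_update_self_none (g : CubeFace N) (p : Fin N) :
    kappa (Function.update g p none) p = kappa g p :=
  kappa_congr fun _ hq => Function.update_of_ne hq.ne _ _

lemma asterisks_update_none (g : CubeFace N) (p : Fin N) :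
    asterisks (Function.update g p none) = insert p (asterisks g) := by
  ext q
  by_cases hq : q = p
  · subst hq; simp [mem_asterisks]
  · simp [mem_asterisks, hq]

lemma isFace_update_none {k : ℕ} {g : CubeFace N} {p : Fin N} (hg : IsFace k g)
    (hp : g p ≠ none) : IsFace (k + 1) (Function.update g p none) := by
  rw [isFace_iff_card_asterisks, asterisks_update_none,
    card_insert_of_notMem (mt mem_asterisks.mp hp), isFace_iff_card_asterisks.mp hg]

lemma subfaceAt_iff {f g : CubeFace N} {p : Fin N} {d : Bool} :
    SubfaceAt f g p d ↔ g p = some d ∧ f = Function.update g p none := by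
  constructor
  · rintro ⟨hfp, hgp, hg⟩
    refine ⟨hgp, funext fun q => ?_⟩
    by_cases hq : q = p
    · subst hq; simp [hfp]
    · rw [Function.update_of_ne hq, hg q hq]
  · rintro ⟨hgp, rfl⟩
    exact ⟨by simp, hgp, fun q hq => (Function.update_of_ne hq _ _).symm⟩

lemma incoming_iff {f g : CubeFace N} :
    Incoming f g ↔ ∃ p, g p = some (kappa g p) ∧ f = Function.update g p none := by
  refine exists_congr fun p => ?_
  rw [subfaceAt_iff]
  exact and_congr_left fun hf => by rw [hf, kappa_update_self_none]

/-- The positions `p` at which `g` is an incoming subface of `Function.update g p none`. -/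
def incomingDigits (g : CubeFace N) : Finset (Fin N) :=
  univ.filter fun p => g p = some (kappa g p)

lemma incomingDigits_subset_compl_asterisks (g : CubeFace N) :
    incomingDigits g ⊆ (asterisks g)ᶜ := by
  intro p hp
  simp_all [incomingDigits, mem_asterisks]

lemma faceOrder_eq_card_incomingDigits {n : ℕ} (hn : 1 ≤ n) {g : CubeFace N}
    (hg : IsFace (n - 1) g) : faceOrder n g = (incomingDigits g).card := by
  have hdigit : ∀ p ∈ incomingDigits g, g p ≠ none := fun p hp => by
    simp_all [incomingDigits]
  let restore : {p // p ∈ incomingDigits g} → {f // IsFace n f ∧ Incoming f g} :=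
    fun p => ⟨Function.update g p none,
      Nat.sub_add_cancel hn ▸ isFace_update_none hg (hdigit p p.2),
      incoming_iff.mpr ⟨p, (mem_filter.mp p.2).2, rfl⟩⟩
  have hbij : Function.Bijective restore := by
    constructor
    · rintro ⟨p, hp⟩ ⟨p', hp'⟩ h
      by_contra hne
      have hval := congrFun (congrArg Subtype.val h) p
      simp only [restore, Function.update_self] at hval
      rw [Function.update_of_ne (fun h => hne (Subtype.ext h))] at hval
      exact hdigit p hp hval.symm
    · rintro ⟨f, -, hfg⟩
      obtain ⟨p, hgp, rfl⟩ := incoming_iff.mp hfg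
      exact ⟨⟨p, mem_filter.mpr ⟨mem_univ p, hgp⟩⟩, rfl⟩
  rw [faceOrder, ← Nat.card_eq_of_bijective restore hbij, Nat.card_eq_fintype_card,
    Fintype.card_coe]

def DigitsByKappa (c : Bool → Bool) (g : CubeFace N) : Prop :=
  ∀ p, g p ≠ none → g p = some (c (kappa g p))

lemma incomingDigits_eq_compl_asterisks_iff {g : CubeFace N} :
    incomingDigits g = (asterisks g)ᶜ ↔ DigitsByKappa id g := by
  simp only [Finset.ext_iff, incomingDigits, mem_compl, mem_asterisks, mem_filter, mem_univ,
    true_and, DigitsByKappa, id]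
  refine forall_congr' fun p => ⟨fun h => h.mpr, fun h => ⟨fun hp => ?_, h⟩⟩
  simp [hp]

lemma incomingDigits_eq_empty_iff {g : CubeFace N} :
    incomingDigits g = ∅ ↔ DigitsByKappa not g := by
  simp only [incomingDigits, filter_eq_empty_iff, mem_univ, true_implies, DigitsByKappa]
  refine forall_congr' fun p => ?_
  cases g p <;> cases kappa g p <;> simp

lemma faceOrder_eq_sub_add_one_iff {n : ℕ} (hn : 1 ≤ n) (hnN : n ≤ N) {g : CubeFace N}
    (hg : IsFace (n - 1) g) : faceOrder n g = N - n + 1 ↔ DigitsByKappa id g := by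
  have hcard : (asterisks g)ᶜ.card = N - n + 1 := by
    rw [card_compl_asterisks hg]
    omega
  rw [faceOrder_eq_card_incomingDigits hn hg, ← hcard, ← incomingDigits_eq_compl_asterisks_iff]
  exact ⟨fun h => eq_of_subset_of_card_le (incomingDigits_subset_compl_asterisks g) h.ge,
    congrArg card⟩

lemma faceOrder_eq_zero_iff {n : ℕ} (hn : 1 ≤ n) {g : CubeFace N} (hg : IsFace (n - 1) g) :
    faceOrder n g = 0 ↔ DigitsByKappa not g := by
  rw [faceOrder_eq_card_incomingDigits hn hg, card_eq_zero, incomingDigits_eq_empty_iff]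

def ofAsterisks (c : Bool → Bool) (S : Finset (Fin N)) : CubeFace N :=
  fun p => if p ∈ S then none else some (c (decide (Odd (S.filter (· < p)).card)))

lemma asterisks_ofAsterisks (c : Bool → Bool) (S : Finset (Fin N)) :
    asterisks (ofAsterisks c S) = S := by
  ext p
  by_cases hp : p ∈ S <;> simp [mem_asterisks, ofAsterisks, hp]

lemma digitsByKappa_ofAsterisks (c : Bool → Bool) (S : Finset (Fin N)) :
    DigitsByKappa c (ofAsterisks c S) := by
  intro p hp
  rw [kappa_eq, asterisks_ofAsterisks]
  simp_all [ofAsterisks]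

lemma ofAsterisks_asterisks {c : Bool → Bool} {g : CubeFace N} (hg : DigitsByKappa c g) :
    ofAsterisks c (asterisks g) = g := by
  funext p
  by_cases hp : g p = none
  · simp [ofAsterisks, mem_asterisks, hp]
  · rw [hg p hp, kappa_eq]
    simp [ofAsterisks, mem_asterisks, hp]

def equivAsterisks (c : Bool → Bool) (k : ℕ) :
    {g : CubeFace N // IsFace k g ∧ DigitsByKappa c g} ≃
      {S : Finset (Fin N) // S.card = k} where
  toFun g := ⟨asterisks g, g.2.1⟩
  invFun S := ⟨ofAsterisks c S, (congrArg card (asterisks_ofAsterisks c S.1)).trans S.2,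
    digitsByKappa_ofAsterisks c S.1⟩
  left_inv g := Subtype.ext (ofAsterisks_asterisks g.2.2)
  right_inv S := Subtype.ext (asterisks_ofAsterisks c S.1)

lemma card_isFace_digitsByKappa (c : Bool → Bool) (k : ℕ) :
    Nat.card {g : CubeFace N // IsFace k g ∧ DigitsByKappa c g} = N.choose k := by
  rw [Nat.card_congr (equivAsterisks c k), Nat.card_eq_fintype_card, Fintype.card_finset_len,
    Fintype.card_fin]

end CubeFace

/-- The `N`-cube has exactly `N.choose (n-1)` absolutely incoming `(n-1)`-faces
(those of maximal order `N - n + 1`) and exactly `N.choose (n-1)` absolutely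
outgoing `(n-1)`-faces (those of order `0`). -/
theorem stmt0 (n N : ℕ) (h2 : 2 ≤ n) (hN : n ≤ N) :
    Nat.card {g : CubeFace N // IsFace (n - 1) g ∧ faceOrder n g = N - n + 1}
      = N.choose (n - 1) ∧
    Nat.card {g : CubeFace N // IsFace (n - 1) g ∧ faceOrder n g = 0}
      = N.choose (n - 1) := by
  have hn : 1 ≤ n := by omega
  constructor
  · rw [← CubeFace.card_isFace_digitsByKappa id]
    exact Nat.card_congr <| Equiv.subtypeEquivRight fun g =>
      and_congr_right fun hg => CubeFace.faceOrder_eq_sub_add_one_iff hn hN hg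
  · rw [← CubeFace.card_isFace_digitsByKappa not]
    exact Nat.card_congr <| Equiv.subtypeEquivRight fun g =>
      and_congr_right fun hg => CubeFace.faceOrder_eq_zero_iff hn hg
end

section
/- Fix n ≥ 2 and, for 1 ≤ i ≤ n+1, let L_i be the n-face of the (n+1)-cube I^{n+1} whose digit at position i is 0 if i is odd and 1 if i is even, with asterisks at all other positions. Then for all 1 ≤ i < j ≤ n+1, the intersection L_i ∩ L_j is an (n−1)-face of I^{n+1} (the face with the two digits at positions i and j as in L_i and L_j, and asterisks elsewhere) which is an outgoing subface of L_i and an incoming subface of L_j. -/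
/-- The `n`-face `L_i` of the `(n+1)`-cube: its digit at position `i` is 0 if the
1-based position `i+1` is odd (i.e. `i` is even) and 1 if it is even, with asterisks
at all other positions. -/
def Lface (n : ℕ) (i : Fin (n + 1)) : CubeFace (n + 1) :=
  fun j => if j = i then some (decide (Odd (i : ℕ))) else none

/-- The `(n-1)`-face `L_i ∩ L_j`: digits at positions `i` and `j` as in `L_i` and `L_j`,
asterisks elsewhere. -/
def LLcap (n : ℕ) (i j : Fin (n + 1)) : CubeFace (n + 1) :=
  fun q => if q = i then some (decide (Odd (i : ℕ)))
           else if q = j then some (decide (Odd (j : ℕ))) else none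

/-! `L_i ∩ L_j` is `L_i` with the asterisk at `j` filled in, and also `L_j` with the asterisk
at `i` filled in. Every position before `i` is an asterisk of `L_j`, so `κ(L_j, i)` is exactly
the digit `L_i` puts at `i`: incoming. Before `j`, the face `L_i` has one asterisk fewer
(position `i` is a digit), so `κ(L_i, j)` is the opposite of the digit `L_j` puts at `j`:
outgoing. -/

open Finset

section CubeFace

variable {N : ℕ}

theorem subfaceAt_update {f : CubeFace N} {p : Fin N} (hp : f p = none) (d : Bool) :
    SubfaceAt f (Function.update f p (some d)) p d :=
  ⟨hp, Function.update_self .., fun _ hq => Function.update_of_ne hq ..⟩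

theorem IsFace.update {k : ℕ} {f : CubeFace N} (hf : IsFace k f) {p : Fin N} (hp : f p = none)
    (d : Bool) : IsFace (k - 1) (Function.update f p (some d)) := by
  have hfilter : filter (fun q => Function.update f p (some d) q = none) univ
      = (filter (fun q => f q = none) univ).erase p := by
    ext q
    by_cases hq : q = p <;> simp [hq]
  rw [IsFace, hfilter, card_erase_of_mem (by simpa using hp), hf]

end CubeFace

section Lface

variable {n : ℕ}

theorem Lface_eq_none_iff {i q : Fin (n + 1)} : Lface n i q = none ↔ q ≠ i := by
  by_cases hq : q = i <;> simp [Lface, hq]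

theorem isFace_Lface (i : Fin (n + 1)) : IsFace n (Lface n i) := by
  have hfilter : filter (fun q => Lface n i q = none) univ = univ.erase i := by
    ext q
    simp [Lface_eq_none_iff]
  rw [IsFace, hfilter, card_erase_of_mem (mem_univ i), card_univ, Fintype.card_fin,
    Nat.add_sub_cancel]

theorem kappa_Lface (i p : Fin (n + 1)) :
    kappa (Lface n i) p = decide (Odd #((Iio p).erase i)) := by
  have hfilter : filter (fun q => q < p ∧ Lface n i q = none) univ = (Iio p).erase i := by
    ext q
    simp [Lface_eq_none_iff, and_comm]
  rw [kappa, hfilter]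

theorem kappa_Lface_of_lt {i p : Fin (n + 1)} (hip : i < p) :
    kappa (Lface n i) p = !decide (Odd (p : ℕ)) := by
  obtain ⟨m, hm⟩ : ∃ m, (p : ℕ) = m + 1 :=
    Nat.exists_eq_add_one.mpr (lt_of_le_of_lt (Nat.zero_le i) hip)
  rw [kappa_Lface, card_erase_of_mem (mem_Iio.mpr hip), Fin.card_Iio]
  simp [hm, Nat.odd_add_one, ← Nat.not_even_iff_odd]

theorem kappa_Lface_of_gt {i p : Fin (n + 1)} (hpi : p < i) :
    kappa (Lface n i) p = decide (Odd (p : ℕ)) := by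
  rw [kappa_Lface, erase_eq_of_notMem (by simpa using hpi.le), Fin.card_Iio]

theorem LLcap_eq_update_left {i j : Fin (n + 1)} (hij : i ≠ j) :
    LLcap n i j = Function.update (Lface n i) j (some (decide (Odd (j : ℕ)))) := by
  funext q
  by_cases hqi : q = i
  · simp [LLcap, Lface, hqi, hij]
  · by_cases hqj : q = j <;> simp [LLcap, Lface, hqi, hqj, hij.symm]

theorem LLcap_eq_update_right {i j : Fin (n + 1)} (hij : i ≠ j) :
    LLcap n i j = Function.update (Lface n j) i (some (decide (Odd (i : ℕ)))) := by
  funext q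
  by_cases hqi : q = i
  · simp [LLcap, hqi]
  · by_cases hqj : q = j <;> simp [LLcap, Lface, hqi, hqj, hij.symm, Function.update_of_ne]

end Lface

theorem stmt2_general (n : ℕ) (i j : Fin (n + 1)) (hij : i < j) :
    IsFace (n - 1) (LLcap n i j) ∧
    Outgoing (Lface n i) (LLcap n i j) ∧
    Incoming (Lface n j) (LLcap n i j) := by
  have hj : Lface n i j = none := Lface_eq_none_iff.mpr hij.ne'
  have hi : Lface n j i = none := Lface_eq_none_iff.mpr hij.ne
  refine ⟨?_, ⟨j, ?_⟩, ⟨i, ?_⟩⟩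
  · rw [LLcap_eq_update_left hij.ne]
    exact (isFace_Lface i).update hj _
  · rw [kappa_Lface_of_lt hij, Bool.not_not, LLcap_eq_update_left hij.ne]
    exact subfaceAt_update hj _
  · rw [kappa_Lface_of_gt hij, LLcap_eq_update_right hij.ne]
    exact subfaceAt_update hi _

/-- For `i < j`, the intersection `L_i ∩ L_j` is an `(n-1)`-face of `I^{n+1}` which is an
outgoing subface of `L_i` and an incoming subface of `L_j`. -/
theorem stmt2 (n : ℕ) (hn : 2 ≤ n) (i j : Fin (n + 1)) (hij : i < j) :
    IsFace (n - 1) (LLcap n i j) ∧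
    Outgoing (Lface n i) (LLcap n i j) ∧
    Incoming (Lface n j) (LLcap n i j) :=
  stmt2_general n i j hij
end

section
/- Fix n ≥ 2 and, for 1 ≤ i ≤ n+1, let R_i be the n-face of the (n+1)-cube I^{n+1} whose digit at position i is 1 if i is odd and 0 if i is even, with asterisks at all other positions. Then for all 1 ≤ i < j ≤ n+1, the intersection R_i ∩ R_j is an (n−1)-face of I^{n+1} which is an outgoing subface of R_j and an incoming subface of R_i. -/
/-- The `n`-face `R_i` of the `(n+1)`-cube: its digit at position `i` is 1 if the
1-based position `i+1` is odd (i.e. `i` is even) and 0 if it is even, with asterisks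
at all other positions. -/
def Rface (n : ℕ) (i : Fin (n + 1)) : CubeFace (n + 1) :=
  fun j => if j = i then some (decide (Even (i : ℕ))) else none

/-- The `(n-1)`-face `R_i ∩ R_j`: digits at positions `i` and `j` as in `R_i` and `R_j`,
asterisks elsewhere. -/
def RRcap (n : ℕ) (i j : Fin (n + 1)) : CubeFace (n + 1) :=
  fun q => if q = i then some (decide (Even (i : ℕ)))
           else if q = j then some (decide (Even (j : ℕ))) else none

section CubeFaces

variable {n : ℕ} {i j p q : Fin (n + 1)}

theorem Rface_eq_none_iff : Rface n i q = none ↔ q ≠ i := by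
  by_cases h : q = i <;> simp [Rface, h]

theorem RRcap_eq_none_iff : RRcap n i j q = none ↔ q ≠ i ∧ q ≠ j := by
  unfold RRcap
  split_ifs <;> simp_all

theorem isFace_RRcap (hij : i ≠ j) : IsFace (n - 1) (RRcap n i j) := by
  have hnone : Finset.filter (fun q => RRcap n i j q = none) Finset.univ = Finset.univ \ {i, j} := by
    ext q
    simp [RRcap_eq_none_iff]
  rw [IsFace, hnone, Finset.card_sdiff_of_subset (Finset.subset_univ _),
    Finset.card_pair hij, Finset.card_univ, Fintype.card_fin]
  omega

theorem kappa_Rface_of_lt (hp : p < i) : kappa (Rface n i) p = !decide (Even (p : ℕ)) := by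
  have hbefore : Finset.filter (fun q => q < p ∧ Rface n i q = none) Finset.univ = Finset.Iio p := by
    ext q
    simp only [Finset.mem_filter, Finset.mem_univ, true_and, Finset.mem_Iio, Rface_eq_none_iff]
    exact ⟨And.left, fun hq => ⟨hq, (hq.trans hp).ne⟩⟩
  rw [kappa, hbefore, Fin.card_Iio]
  simp [← Nat.not_even_iff_odd]

theorem kappa_Rface_of_gt (hp : i < p) : kappa (Rface n i) p = decide (Even (p : ℕ)) := by
  have hbefore : Finset.filter (fun q => q < p ∧ Rface n i q = none) Finset.univ
      = Finset.Iio p \ {i} := by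
    ext q
    simp [Rface_eq_none_iff]
  have hp1 : 1 ≤ (p : ℕ) := Nat.one_le_of_lt (Fin.lt_def.mp hp)
  rw [kappa, hbefore, Finset.card_sdiff_of_subset (by simpa using hp), Fin.card_Iio,
    Finset.card_singleton, decide_eq_decide, Nat.odd_iff, Nat.even_iff]
  omega

theorem subfaceAt_Rface_right_RRcap (hij : i ≠ j) :
    SubfaceAt (Rface n j) (RRcap n i j) i (decide (Even (i : ℕ))) := by
  refine ⟨Rface_eq_none_iff.mpr hij, by simp [RRcap], fun q hq => ?_⟩
  by_cases hj : q = j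
  · simp [RRcap, Rface, hj, hij.symm]
  · simp [RRcap, Rface, hq, hj]

theorem subfaceAt_Rface_left_RRcap (hij : i ≠ j) :
    SubfaceAt (Rface n i) (RRcap n i j) j (decide (Even (j : ℕ))) := by
  refine ⟨Rface_eq_none_iff.mpr hij.symm, by simp [RRcap, hij.symm], fun q hq => ?_⟩
  by_cases hi : q = i <;> simp [RRcap, Rface, hq, hi]

end CubeFaces

theorem stmt3_general (n : ℕ) (i j : Fin (n + 1)) (hij : i < j) :
    IsFace (n - 1) (RRcap n i j) ∧
    Outgoing (Rface n j) (RRcap n i j) ∧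
    Incoming (Rface n i) (RRcap n i j) := by
  refine ⟨isFace_RRcap hij.ne, ⟨i, ?_⟩, ⟨j, ?_⟩⟩
  · rw [kappa_Rface_of_lt hij, Bool.not_not]
    exact subfaceAt_Rface_right_RRcap hij.ne
  · rw [kappa_Rface_of_gt hij]
    exact subfaceAt_Rface_left_RRcap hij.ne

/-- For `i < j`, the intersection `R_i ∩ R_j` is an `(n-1)`-face of `I^{n+1}` which is an
outgoing subface of `R_j` and an incoming subface of `R_i`. -/
theorem stmt3 (n : ℕ) (hn : 2 ≤ n) (i j : Fin (n + 1)) (hij : i < j) :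
    IsFace (n - 1) (RRcap n i j) ∧
    Outgoing (Rface n j) (RRcap n i j) ∧
    Incoming (Rface n i) (RRcap n i j) :=
  stmt3_general n i j hij
end

section
/- For x, y, z with x = 2 + 5·m₁, y = 2 + 5·m₂, z = 2 + 5·m₃ in ℤ/25ℤ (m₁, m₂, m₃ integers), the element w = x + z + xyz is a unit in ℤ/25ℤ, and the electric map R(x,y,z) = (x·y·w⁻¹, w, y·z·w⁻¹) satisfies: x·y·w⁻¹ = 2 + 5·(m₁ + 2m₂ − 2), w = 2 + 5·(2 − m₂), and y·z·w⁻¹ = 2 + 5·(m₃ + 2m₂ − 2) in ℤ/25ℤ. In particular the electric map preserves the subset X = {x ∈ ℤ/25ℤ : x ≡ 2 mod 5}, and in the coordinates x_i = 2 + 5n_i with n_i ∈ ℤ/5ℤ it is given by R(n₁,n₂,n₃) = (n₁ + 2n₂ − 2, 2 − n₂, n₃ + 2n₂ − 2). -/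
/-!
Modulo 25 the product of two multiples of 5 vanishes, so on elements `2 + 5t` the electric map
becomes affine in the `t`'s: `w = 2 + 5(2 - m₂)`, and `x·y = (2 + 5(m₁ + 2m₂ - 2))·w` as an
identity modulo 25. Every `2 + 5t` is a unit with inverse `13 + 5t`, so dividing by `w` gives the
formulas. Reduction modulo 5 kills the `5t` parts, which gives the invariance of `X`.
-/

theorem ZMod.castHom_eq_castHom_iff {m n : ℕ} (h : m ∣ n) (a b : ZMod n) :
    castHom h (ZMod m) a = castHom h (ZMod m) b ↔ ∃ t : ZMod n, a = b + m * t := by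
  constructor
  · obtain ⟨i, rfl⟩ := intCast_surjective a
    obtain ⟨j, rfl⟩ := intCast_surjective b
    rw [map_intCast, map_intCast, eq_comm, intCast_eq_intCast_iff_dvd_sub]
    rintro ⟨k, hk⟩
    exact ⟨k, by rw [← sub_add_cancel i j, hk]; push_cast; ring⟩
  · rintro ⟨t, rfl⟩
    rw [map_add, map_mul, map_natCast, natCast_self, zero_mul, add_zero]

section CharTwentyFive
variable {R : Type*} [CommRing R] (h25 : (25 : R) = 0)
include h25

theorem isUnit_two_add_five_mul (t : R) : IsUnit (2 + 5 * t) :=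
  IsUnit.of_mul_eq_one (13 + 5 * t) (by linear_combination (1 + 3 * t + t ^ 2) * h25)

theorem electric_weight_eq (a b c : R) :
    (2 + 5 * a) + (2 + 5 * c) + (2 + 5 * a) * (2 + 5 * b) * (2 + 5 * c) = 2 + 5 * (2 - b) := by
  linear_combination (a + b + c + 2 * (a * b + b * c + c * a) + 5 * a * b * c) * h25

theorem two_add_five_mul_mul_two_add_five_mul (a b : R) :
    (2 + 5 * a) * (2 + 5 * b) = (2 + 5 * (a + 2 * b - 2)) * (2 + 5 * (2 - b)) := by
  linear_combination (4 - 2 * a - 6 * b + 2 * a * b + 2 * b ^ 2) * h25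
end CharTwentyFive

theorem ZMod.two_add_five_mul_mul_two_add_five_mul_mul_inv (a b : ZMod 25) :
    (2 + 5 * a) * (2 + 5 * b) * (2 + 5 * (2 - b))⁻¹ = 2 + 5 * (a + 2 * b - 2) := by
  have h25 : (25 : ZMod 25) = 0 := by decide
  rw [two_add_five_mul_mul_two_add_five_mul h25, mul_assoc, ZMod.mul_inv_of_unit _
    (isUnit_two_add_five_mul h25 _), mul_one]

/-- In `ℤ/25ℤ`, for `x = 2 + 5m₁`, `y = 2 + 5m₂`, `z = 2 + 5m₃`, the element
`w = x + z + xyz` is a unit, and the electric map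
`R(x,y,z) = (x·y·w⁻¹, w, y·z·w⁻¹)` satisfies
`x·y·w⁻¹ = 2 + 5(m₁ + 2m₂ − 2)`, `w = 2 + 5(2 − m₂)`, `y·z·w⁻¹ = 2 + 5(m₃ + 2m₂ − 2)`.
In particular the electric map preserves the subset `X = {x : x ≡ 2 mod 5}` of
`ℤ/25ℤ`. -/
theorem stmt12 (m₁ m₂ m₃ : ℤ) (x y z w : ZMod 25)
    (hx : x = 2 + 5 * (m₁ : ZMod 25))
    (hy : y = 2 + 5 * (m₂ : ZMod 25))
    (hz : z = 2 + 5 * (m₃ : ZMod 25))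
    (hw : w = x + z + x * y * z) :
    IsUnit w ∧
    x * y * w⁻¹ = 2 + 5 * ((m₁ : ZMod 25) + 2 * (m₂ : ZMod 25) - 2) ∧
    w = 2 + 5 * (2 - (m₂ : ZMod 25)) ∧
    y * z * w⁻¹ = 2 + 5 * ((m₃ : ZMod 25) + 2 * (m₂ : ZMod 25) - 2) ∧
    (∀ a b c : ZMod 25,
      ZMod.castHom (by norm_num : (5 : ℕ) ∣ 25) (ZMod 5) a = 2 →
      ZMod.castHom (by norm_num : (5 : ℕ) ∣ 25) (ZMod 5) b = 2 →
      ZMod.castHom (by norm_num : (5 : ℕ) ∣ 25) (ZMod 5) c = 2 →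
        ZMod.castHom (by norm_num : (5 : ℕ) ∣ 25) (ZMod 5)
            (a * b * (a + c + a * b * c)⁻¹) = 2 ∧
        ZMod.castHom (by norm_num : (5 : ℕ) ∣ 25) (ZMod 5) (a + c + a * b * c) = 2 ∧
        ZMod.castHom (by norm_num : (5 : ℕ) ∣ 25) (ZMod 5)
            (b * c * (a + c + a * b * c)⁻¹) = 2) := by
  have h25 : (25 : ZMod 25) = 0 := by decide
  have mem_X_iff (a : ZMod 25) :
      ZMod.castHom (by norm_num : (5 : ℕ) ∣ 25) (ZMod 5) a = 2 ↔ ∃ t, a = 2 + 5 * t := by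
    rw [← map_ofNat (ZMod.castHom (by norm_num : (5 : ℕ) ∣ 25) (ZMod 5)) 2,
      ZMod.castHom_eq_castHom_iff]
    rfl
  subst hx hy hz hw
  rw [electric_weight_eq h25]
  refine ⟨isUnit_two_add_five_mul h25 _,
    ZMod.two_add_five_mul_mul_two_add_five_mul_mul_inv _ _, rfl, ?_, ?_⟩
  · rw [mul_comm (2 + 5 * (m₂ : ZMod 25)), ZMod.two_add_five_mul_mul_two_add_five_mul_mul_inv]
  · rintro a b c ha hb hc
    obtain ⟨r, rfl⟩ := (mem_X_iff a).1 ha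
    obtain ⟨s, rfl⟩ := (mem_X_iff b).1 hb
    obtain ⟨t, rfl⟩ := (mem_X_iff c).1 hc
    rw [electric_weight_eq h25, ZMod.two_add_five_mul_mul_two_add_five_mul_mul_inv,
      mul_comm (2 + 5 * s), ZMod.two_add_five_mul_mul_two_add_five_mul_mul_inv,
      mem_X_iff, mem_X_iff, mem_X_iff]
    exact ⟨⟨_, rfl⟩, ⟨_, rfl⟩, ⟨_, rfl⟩⟩
end

section
/- Over the real numbers, the function φ(x,y,z) = y is a multiplicative tetrahedral 3-cocycle for the electric map R(x,y,z) = (xy/w, w, yz/w), w = x + z + xyz. Explicitly: let a₁,…,a₆ ∈ ℝ and define (a₁',a₂',a₃') = R(a₁,a₂,a₃), (a₁'',a₄',a₅') = R(a₁',a₄,a₅), (a₂'',a₄'',a₆') = R(a₂',a₄',a₆), (a₃'',a₅'',a₆'') = R(a₃',a₅',a₆'), and also (b₃,b₅,b₆) = R(a₃,a₅,a₆), (b₂,b₄,c₆) = R(a₂,a₄,b₆), (b₁,c₄,c₅) = R(a₁,b₄,b₅), (c₁,c₂,c₃) = R(b₁,b₂,b₃); assume that in each of these eight applications of R the quantity x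 + z + xyz formed from the three arguments is nonzero. Then a₂ · a₄ · a₄' · a₅' = a₅ · a₄ · b₄ · b₂. -/
/-!
The middle output `w` of the electric map undoes the division in its outer outputs:
`w · (xy/w) = xy` and `w · (yz/w) = yz`. Hence `a₄' a₅' = a₄ a₅` and `b₄ b₂ = a₂ a₄`,
so both sides of the cocycle identity equal `a₂ a₄² a₅`.
-/

/-- The denominator `w = x + z + xyz` of the electric map. -/
def elecW (x y z : ℝ) : ℝ := x + z + x * y * z

/-- The electric solution of the functional tetrahedron equation:
`R(x,y,z) = (xy/w, w, yz/w)` with `w = x + z + xyz`. -/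
noncomputable def elecR (x y z : ℝ) : ℝ × ℝ × ℝ :=
  (x * y / elecW x y z, elecW x y z, y * z / elecW x y z)

section

variable {x y z p q r : ℝ}

theorem elecR_mid_mul_left (h : (p, q, r) = elecR x y z) (hw : elecW x y z ≠ 0) :
    q * p = x * y := by
  simp only [elecR, Prod.mk.injEq] at h
  obtain ⟨rfl, rfl, -⟩ := h
  field_simp

theorem elecR_mid_mul_right (h : (p, q, r) = elecR x y z) (hw : elecW x y z ≠ 0) :
    q * r = y * z := by
  simp only [elecR, Prod.mk.injEq] at h
  obtain ⟨-, rfl, rfl⟩ := h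
  field_simp

end

theorem stmt13_general
    (a2 a4 a5 a1' a1'' a4' a5' b2 b4 b6 c6 : ℝ)
    (h2 : (a1'', a4', a5') = elecR a1' a4 a5) (w2 : elecW a1' a4 a5 ≠ 0)
    (h6 : (b2, b4, c6) = elecR a2 a4 b6) (w6 : elecW a2 a4 b6 ≠ 0) :
    a2 * a4 * a4' * a5' = a5 * a4 * b4 * b2 := by
  have hleft : a4' * a5' = a4 * a5 := elecR_mid_mul_right h2 w2
  have hright : b4 * b2 = a2 * a4 := elecR_mid_mul_left h6 w6
  linear_combination (a2 * a4) * hleft - (a5 * a4) * hright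

/-- The function `φ(x,y,z) = y` is a multiplicative tetrahedral 3-cocycle for the
electric map: with the intermediate values defined by the left-hand-side and the
right-hand-side compositions (all eight denominators being nonzero), one has
`a₂ · a₄ · a₄' · a₅' = a₅ · a₄ · b₄ · b₂`. -/
theorem stmt13
    (a1 a2 a3 a4 a5 a6 a1' a2' a3' a1'' a4' a5' a2'' a4'' a6' a3'' a5'' a6''
      b1 b2 b3 b4 b5 b6 c1 c2 c3 c4 c5 c6 : ℝ)
    (h1 : (a1', a2', a3') = elecR a1 a2 a3) (w1 : elecW a1 a2 a3 ≠ 0)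
    (h2 : (a1'', a4', a5') = elecR a1' a4 a5) (w2 : elecW a1' a4 a5 ≠ 0)
    (h3 : (a2'', a4'', a6') = elecR a2' a4' a6) (w3 : elecW a2' a4' a6 ≠ 0)
    (h4 : (a3'', a5'', a6'') = elecR a3' a5' a6') (w4 : elecW a3' a5' a6' ≠ 0)
    (h5 : (b3, b5, b6) = elecR a3 a5 a6) (w5 : elecW a3 a5 a6 ≠ 0)
    (h6 : (b2, b4, c6) = elecR a2 a4 b6) (w6 : elecW a2 a4 b6 ≠ 0)
    (h7 : (b1, c4, c5) = elecR a1 b4 b5) (w7 : elecW a1 b4 b5 ≠ 0)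
    (h8 : (c1, c2, c3) = elecR b1 b2 b3) (w8 : elecW b1 b2 b3 ≠ 0) :
    a2 * a4 * a4' * a5' = a5 * a4 * b4 * b2 :=
  stmt13_general a2 a4 a5 a1' a1'' a4' a5' b2 b4 b6 c6 h2 w2 h6 w6
end

section
/- Over the real numbers, the function φ(x,y,z) = x + z + xyz (the second component of the electric map) is a multiplicative tetrahedral 3-cocycle for the electric map R(x,y,z) = (xy/w, w, yz/w), w = x + z + xyz: for all a₁,…,a₆ ∈ ℝ such that in each of the eight applications of R occurring in the two compositions defining the intermediate values the quantity x + z + xyz formed from the three arguments is nonzero, one has φ(a₁,a₂,a₃)·φ(a₁',a₄,a₅)·φ(a₂',a₄',a₆)·φ(a₃',a₅',a₆') = φ(a₃,a₅,a₆)·φ(a₂,a₄,b₆)·φ(a₁,b₄,b₅)·φ(b₁,b₂,b₃). -/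
section ElectricMap

variable {x y z x' y' z' : ℝ}

theorem eq_elecR_iff (hw : elecW x y z ≠ 0) :
    (x', y', z') = elecR x y z ↔ y' = elecW x y z ∧ x' * y' = x * y ∧ y' * z' = y * z := by
  simp only [elecR, Prod.mk.injEq]
  constructor
  · rintro ⟨rfl, rfl, rfl⟩
    exact ⟨rfl, div_mul_cancel₀ _ hw, mul_div_cancel₀ _ hw⟩
  · rintro ⟨rfl, hx, hz⟩
    exact ⟨eq_div_of_mul_eq hw hx, rfl, eq_div_of_mul_eq hw (by rw [mul_comm, hz])⟩

theorem elecW_mul_elecW_left (h : (x', y', z') = elecR x y z) (hw : elecW x y z ≠ 0)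
    (u v : ℝ) : elecW x y z * elecW x' u v = x * y + elecW x y z * v + x * y * u * v := by
  obtain ⟨rfl, hx, -⟩ := (eq_elecR_iff hw).1 h
  unfold elecW at hx ⊢
  linear_combination (1 + u * v) * hx

theorem elecW_mul_elecW_right (h : (x', y', z') = elecR x y z) (hw : elecW x y z ≠ 0)
    (u v : ℝ) : elecW x y z * elecW u v z' = u * elecW x y z + y * z + u * v * y * z := by
  obtain ⟨rfl, -, hz⟩ := (eq_elecR_iff hw).1 h
  unfold elecW at hz ⊢
  linear_combination (1 + u * v) * hz

end ElectricMap

section Cocycle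

variable {a1 a2 a3 a4 a5 a6 a1' a2' a3' a1'' a4' a5' a2'' a4'' a6' b1 b2 b3 b4 b5 b6 c4 c5 c6 : ℝ}

theorem elecW_prod_lhs_composition
    (h1 : (a1', a2', a3') = elecR a1 a2 a3) (w1 : elecW a1 a2 a3 ≠ 0)
    (h2 : (a1'', a4', a5') = elecR a1' a4 a5) (w2 : elecW a1' a4 a5 ≠ 0)
    (h3 : (a2'', a4'', a6') = elecR a2' a4' a6) (w3 : elecW a2' a4' a6 ≠ 0) :
    elecW a1 a2 a3 * elecW a1' a4 a5 * elecW a2' a4' a6 * elecW a3' a5' a6' =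
      (a1 * a2 + elecW a1 a2 a3 * a5 + a1 * a2 * a4 * a5) *
        (a2 * elecW a3 a5 a6 + a5 * a6 + a2 * a4 * a5 * a6) := by
  have hP := elecW_mul_elecW_left h1 w1 a4 a5
  have hB := elecW_mul_elecW_right h3 w3 a3' a5'
  obtain ⟨ha2', -, h23⟩ := (eq_elecR_iff w1).1 h1
  obtain ⟨ha4', -, h45⟩ := (eq_elecR_iff w2).1 h2
  have hQ : elecW a2' a4' a6 * elecW a3' a5' a6' =
      a2 * elecW a3 a5 a6 + a5 * a6 + a2 * a4 * a5 * a6 := by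
    refine mul_left_cancel₀ w1 ?_
    rw [← ha2'] at hP ⊢
    rw [← ha4'] at hP
    unfold elecW at hB ha2' ⊢
    linear_combination a2' * hB + (a2' + a6 + a2' * a4' * a6 + a4' * a5' * a6) * h23
      + a6 * (1 + a2 * a3) * hP + a2 * a3 * a6 * h45 - a2 * a6 * (1 + a4 * a5) * ha2'
  rw [mul_assoc _ (elecW a2' a4' a6), hP, hQ]

theorem elecW_prod_rhs_composition
    (h5 : (b3, b5, b6) = elecR a3 a5 a6) (w5 : elecW a3 a5 a6 ≠ 0)
    (h6 : (b2, b4, c6) = elecR a2 a4 b6) (w6 : elecW a2 a4 b6 ≠ 0)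
    (h7 : (b1, c4, c5) = elecR a1 b4 b5) (w7 : elecW a1 b4 b5 ≠ 0) :
    elecW a3 a5 a6 * elecW a2 a4 b6 * elecW a1 b4 b5 * elecW b1 b2 b3 =
      (a1 * a2 + elecW a1 a2 a3 * a5 + a1 * a2 * a4 * a5) *
        (a2 * elecW a3 a5 a6 + a5 * a6 + a2 * a4 * a5 * a6) := by
  have hQ := elecW_mul_elecW_right h5 w5 a2 a4
  have hA := elecW_mul_elecW_left h7 w7 b2 b3
  obtain ⟨hb5, h35, -⟩ := (eq_elecR_iff w5).1 h5
  obtain ⟨hb4, h24, -⟩ := (eq_elecR_iff w6).1 h6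
  have hP : elecW a1 b4 b5 * elecW b1 b2 b3 =
      a1 * a2 + elecW a1 a2 a3 * a5 + a1 * a2 * a4 * a5 := by
    refine mul_left_cancel₀ w5 ?_
    rw [← hb5] at hQ ⊢
    rw [← hb4] at hQ
    unfold elecW at hA hb5 ⊢
    linear_combination b5 * hA + a1 * (1 + a3 * a5) * hQ
      + (a1 + b5 + a1 * b4 * b5 + a1 * a2 * a4) * h35 + a1 * b3 * b5 * h24
      - a1 * a5 * (1 + a2 * a4) * hb5
  rw [mul_assoc _ (elecW a1 b4 b5), hQ, hP, mul_comm]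

end Cocycle

theorem stmt14_general
    (a1 a2 a3 a4 a5 a6 a1' a2' a3' a1'' a4' a5' a2'' a4'' a6'
      b1 b2 b3 b4 b5 b6 c4 c5 c6 : ℝ)
    (h1 : (a1', a2', a3') = elecR a1 a2 a3) (w1 : elecW a1 a2 a3 ≠ 0)
    (h2 : (a1'', a4', a5') = elecR a1' a4 a5) (w2 : elecW a1' a4 a5 ≠ 0)
    (h3 : (a2'', a4'', a6') = elecR a2' a4' a6) (w3 : elecW a2' a4' a6 ≠ 0)
    (h5 : (b3, b5, b6) = elecR a3 a5 a6) (w5 : elecW a3 a5 a6 ≠ 0)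
    (h6 : (b2, b4, c6) = elecR a2 a4 b6) (w6 : elecW a2 a4 b6 ≠ 0)
    (h7 : (b1, c4, c5) = elecR a1 b4 b5) (w7 : elecW a1 b4 b5 ≠ 0) :
    elecW a1 a2 a3 * elecW a1' a4 a5 * elecW a2' a4' a6 * elecW a3' a5' a6' =
      elecW a3 a5 a6 * elecW a2 a4 b6 * elecW a1 b4 b5 * elecW b1 b2 b3 := by
  rw [elecW_prod_lhs_composition h1 w1 h2 w2 h3 w3, elecW_prod_rhs_composition h5 w5 h6 w6 h7 w7]

/-- The function `φ(x,y,z) = x + z + xyz` (the second component of the electric map)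
is a multiplicative tetrahedral 3-cocycle for the electric map: with the intermediate
values defined by the left-hand-side and the right-hand-side compositions (all eight
denominators being nonzero), the multiplicative 3-cocycle identity holds for `φ`. -/
theorem stmt14
    (a1 a2 a3 a4 a5 a6 a1' a2' a3' a1'' a4' a5' a2'' a4'' a6' a3'' a5'' a6''
      b1 b2 b3 b4 b5 b6 c1 c2 c3 c4 c5 c6 : ℝ)
    (h1 : (a1', a2', a3') = elecR a1 a2 a3) (w1 : elecW a1 a2 a3 ≠ 0)
    (h2 : (a1'', a4', a5') = elecR a1' a4 a5) (w2 : elecW a1' a4 a5 ≠ 0)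
    (h3 : (a2'', a4'', a6') = elecR a2' a4' a6) (w3 : elecW a2' a4' a6 ≠ 0)
    (h4 : (a3'', a5'', a6'') = elecR a3' a5' a6') (w4 : elecW a3' a5' a6' ≠ 0)
    (h5 : (b3, b5, b6) = elecR a3 a5 a6) (w5 : elecW a3 a5 a6 ≠ 0)
    (h6 : (b2, b4, c6) = elecR a2 a4 b6) (w6 : elecW a2 a4 b6 ≠ 0)
    (h7 : (b1, c4, c5) = elecR a1 b4 b5) (w7 : elecW a1 b4 b5 ≠ 0)
    (h8 : (c1, c2, c3) = elecR b1 b2 b3) (w8 : elecW b1 b2 b3 ≠ 0) :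
    elecW a1 a2 a3 * elecW a1' a4 a5 * elecW a2' a4' a6 * elecW a3' a5' a6' =
      elecW a3 a5 a6 * elecW a2 a4 b6 * elecW a1 b4 b5 * elecW b1 b2 b3 :=
  stmt14_general a1 a2 a3 a4 a5 a6 a1' a2' a3' a1'' a4' a5' a2'' a4'' a6' b1 b2 b3 b4 b5 b6 c4 c5 c6
    h1 w1 h2 w2 h3 w3 h5 w5 h6 w6 h7 w7
end

section
/- Let X be a set, k a field, R : X³ → X³ a map satisfying the set-theoretic tetrahedron equation, and φ : X³ → kˣ a multiplicative tetrahedral 3-cocycle for R. For each triple (i,j,l) with 1 ≤ i < j < l ≤ 6, let Φ_{φ,ijl} be the k-linear endomorphism of the free k-module on X⁶ sending the basis vector indexed by (a₁,…,a₆) to φ(a_i,a_j,a_l) times the basis vector indexed by the 6-tuple obtained by replacing the coordinates at positions i, j, l by the three components of R(a_i,a_j,a_l). Then Φ_{φ,123} ∘ Φ_{φ,145} ∘ Φ_{φ,246} ∘ Φ_{φ,356} = Φ_{φ,356} ∘ Φ_{φ,246} ∘ Φ_{φ,145} ∘ Φ_{φ,123} as endomorphisms of the free k-module on X⁶; i.e.,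 the operator Φ_φ determined by Φ_φ(e_x ⊗ e_y ⊗ e_z) = φ(x,y,z)·e_{x'} ⊗ e_{y'} ⊗ e_{z'}, (x',y',z') = R(x,y,z), solves the quantum tetrahedron equation. -/
/-- `appR R i j l` applies the map `R : X³ → X³` to the `i`-th, `j`-th and `l`-th
coordinates of a point of `X⁶`, leaving the other coordinates fixed. -/
def appR {X : Type*} (R : X → X → X → X × X × X) (i j l : Fin 6)
    (a : Fin 6 → X) : Fin 6 → X :=
  fun m =>
    if m = i then (R (a i) (a j) (a l)).1
    else if m = j then (R (a i) (a j) (a l)).2.1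
    else if m = l then (R (a i) (a j) (a l)).2.2
    else a m

/-- The set-theoretic tetrahedron equation for `R : X³ → X³`:
`R₁₂₃ ∘ R₁₄₅ ∘ R₂₄₆ ∘ R₃₅₆ = R₃₅₆ ∘ R₂₄₆ ∘ R₁₄₅ ∘ R₁₂₃` on `X⁶`
(indices here are 0-based). -/
def STTE {X : Type*} (R : X → X → X → X × X × X) : Prop :=
  appR R 0 1 2 ∘ appR R 0 3 4 ∘ appR R 1 3 5 ∘ appR R 2 4 5 =
    appR R 2 4 5 ∘ appR R 1 3 5 ∘ appR R 0 3 4 ∘ appR R 0 1 2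

/-- `φ : X³ → kˣ` is a multiplicative tetrahedral 3-cocycle for `R`: for all
`a₁, …, a₆`, with the intermediate values defined by the left-hand-side and
right-hand-side compositions of the tetrahedron relation,
`φ(a₁,a₂,a₃)φ(a₁',a₄,a₅)φ(a₂',a₄',a₆)φ(a₃',a₅',a₆') =
 φ(a₃,a₅,a₆)φ(a₂,a₄,b₆)φ(a₁,b₄,b₅)φ(b₁,b₂,b₃)`. -/
def Cocycle3 {X : Type*} {k : Type*} [Field k]
    (R : X → X → X → X × X × X) (φ : X → X → X → kˣ) : Prop :=
  ∀ a1 a2 a3 a4 a5 a6 a1' a2' a3' a1'' a4' a5' a2'' a4'' a6' a3'' a5'' a6''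
      b1 b2 b3 b4 b5 b6 c1 c2 c3 c4 c5 c6 : X,
    (a1', a2', a3') = R a1 a2 a3 → (a1'', a4', a5') = R a1' a4 a5 →
    (a2'', a4'', a6') = R a2' a4' a6 → (a3'', a5'', a6'') = R a3' a5' a6' →
    (b3, b5, b6) = R a3 a5 a6 → (b2, b4, c6) = R a2 a4 b6 →
    (b1, c4, c5) = R a1 b4 b5 → (c1, c2, c3) = R b1 b2 b3 →
    φ a1 a2 a3 * φ a1' a4 a5 * φ a2' a4' a6 * φ a3' a5' a6' =
      φ a3 a5 a6 * φ a2 a4 b6 * φ a1 b4 b5 * φ b1 b2 b3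

/-- The twisted permutation-type operator `Φ_{φ,ijl}` on the free `k`-module on `X⁶`:
it sends the basis vector indexed by `a` to `φ(a_i,a_j,a_l)` times the basis vector
indexed by the tuple obtained by replacing the coordinates at positions `i, j, l` of
`a` by the components of `R(a_i, a_j, a_l)`. -/
noncomputable def PhiCoc {X : Type*} (k : Type*) [Field k]
    (R : X → X → X → X × X × X) (φ : X → X → X → kˣ) (i j l : Fin 6) :
    ((Fin 6 → X) →₀ k) →ₗ[k] ((Fin 6 → X) →₀ k) :=
  (Finsupp.lift ((Fin 6 → X) →₀ k) k (Fin 6 → X)) fun a =>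
    ((φ (a i) (a j) (a l) : k)) • Finsupp.single (appR R i j l a) (1 : k)

/-!
Each `Φ_{φ,ijl}` is a monomial operator `e_a ↦ w(a) e_{f(a)}`. A composite of monomial operators
is again monomial, with the composite map and the product of the weights collected along the
orbit of `a`. Hence the quantum tetrahedron equation splits into the set-theoretic one for the
maps and the cocycle identity for the weights.
-/

noncomputable def weightedLmapDomain {α β R : Type*} [CommSemiring R] (f : α → β) (w : α → R) :
    (α →₀ R) →ₗ[R] (β →₀ R) :=
  Finsupp.lift (β →₀ R) R α fun a => w a • Finsupp.single (f a) 1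

section weightedLmapDomain

variable {α β γ R : Type*} [CommSemiring R]

theorem weightedLmapDomain_single (f : α → β) (w : α → R) (a : α) (c : R) :
    weightedLmapDomain f w (Finsupp.single a c) = Finsupp.single (f a) (c * w a) := by
  simp [weightedLmapDomain, Finsupp.smul_single, smul_eq_mul]

theorem weightedLmapDomain_comp (f : β → γ) (w : β → R) (g : α → β) (v : α → R) :
    (weightedLmapDomain f w).comp (weightedLmapDomain g v) =
      weightedLmapDomain (f ∘ g) (fun a => v a * w (g a)) := by
  ext a
  simp [weightedLmapDomain_single]

end weightedLmapDomain

theorem PhiCoc_eq_weightedLmapDomain {X : Type*} (k : Type*) [Field k]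
    (R : X → X → X → X × X × X) (φ : X → X → X → kˣ) (i j l : Fin 6) :
    PhiCoc k R φ i j l = weightedLmapDomain (appR R i j l) fun a => (φ (a i) (a j) (a l) : k) :=
  rfl

theorem Cocycle3.mul_appR_eq {X : Type*} {k : Type*} [Field k]
    {R : X → X → X → X × X × X} {φ : X → X → X → kˣ} (hφ : Cocycle3 R φ) (a : Fin 6 → X) :
    let a₁ := appR R 0 1 2 a
    let a₂ := appR R 0 3 4 a₁
    let a₃ := appR R 1 3 5 a₂
    let b₁ := appR R 2 4 5 a
    let b₂ := appR R 1 3 5 b₁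
    let b₃ := appR R 0 3 4 b₂
    φ (a 0) (a 1) (a 2) * φ (a₁ 0) (a₁ 3) (a₁ 4) * φ (a₂ 1) (a₂ 3) (a₂ 5) *
        φ (a₃ 2) (a₃ 4) (a₃ 5) =
      φ (a 2) (a 4) (a 5) * φ (b₁ 1) (b₁ 3) (b₁ 5) * φ (b₂ 0) (b₂ 3) (b₂ 4) *
        φ (b₃ 0) (b₃ 1) (b₃ 2) :=
  -- each `rfl` holds by eta for pairs, since `appR` at numeral indices reduces definitionally
  hφ (a 0) (a 1) (a 2) (a 3) (a 4) (a 5) _ _ _ _ _ _ _ _ _ _ _ _ _ _ _ _ _ _ _ _ _ _ _ _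
    rfl rfl rfl rfl rfl rfl rfl rfl

/-- If `R` satisfies the set-theoretic tetrahedron equation and `φ` is a multiplicative
tetrahedral 3-cocycle for `R`, then the twisted operator `Φ_φ` solves the quantum
tetrahedron equation `Φ₁₂₃ Φ₁₄₅ Φ₂₄₆ Φ₃₅₆ = Φ₃₅₆ Φ₂₄₆ Φ₁₄₅ Φ₁₂₃`. -/
theorem stmt16 (X : Type*) (k : Type*) [Field k]
    (R : X → X → X → X × X × X) (hR : STTE R)
    (φ : X → X → X → kˣ) (hφ : Cocycle3 R φ) :
    (PhiCoc k R φ 0 1 2).comp ((PhiCoc k R φ 0 3 4).comp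
        ((PhiCoc k R φ 1 3 5).comp (PhiCoc k R φ 2 4 5))) =
      (PhiCoc k R φ 2 4 5).comp ((PhiCoc k R φ 1 3 5).comp
        ((PhiCoc k R φ 0 3 4).comp (PhiCoc k R φ 0 1 2))) := by
  simp only [PhiCoc_eq_weightedLmapDomain, weightedLmapDomain_comp]
  refine congrArg₂ weightedLmapDomain hR (funext fun a => ?_)
  exact_mod_cast (hφ.mul_appR_eq a).symm
end

section
/- Let p be a prime with p ≡ 1 (mod 4) or p = 2, let k ≥ 2 be an integer, and let ε ∈ ℤ/pℤ satisfy ε² = −1. Let X = {x ∈ ℤ/p^kℤ : the image of x under the reduction homomorphism ℤ/p^kℤ → ℤ/pℤ equals ε}. Then for all x, y, z ∈ X: (1) w = x + z + xyz is a unit of ℤ/p^kℤ; (2) the triple (x·y·w⁻¹, w, y·z·w⁻¹) again lies in X³; and (3) the resulting map R : X³ → X³, R(x,y,z) = (xy·w⁻¹, w, yz·w⁻¹), is a bijection of X³ onto itself. -/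
/-!
Modulo `p` the denominator becomes `w ≡ ε + ε + ε³ = ε`, and `ε⁻¹ = -ε` because `ε² = -1`, so
`xy·w⁻¹ ≡ ε·ε·(-ε) = ε`: the map preserves `X³`. Since `ℤ/p^kℤ → ℤ/pℤ` is a local homomorphism
and `ε` is a unit, every element of `X` is a unit. Finally the map is an involution wherever `w`
and `y` are units: the middle coordinate of `R (R (x, y, z))` is `y·(x + z + xyz)·w⁻¹ = y`.
-/

theorem isUnit_of_sq_eq_neg_one {R : Type*} [CommRing R] {ε : R} (hε : ε ^ 2 = -1) : IsUnit ε :=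
  .of_mul_eq_one (-ε) (by linear_combination -hε)

theorem map_add_add_mul_mul {R F : Type*} [CommRing R] [CommRing F] (f : R →+* F) {ε : F}
    {x y z : R} (hε : ε ^ 2 = -1) (hx : f x = ε) (hy : f y = ε) (hz : f z = ε) :
    f (x + z + x * y * z) = ε := by
  rw [map_add, map_add, map_mul, map_mul, hx, hy, hz]
  linear_combination ε * hε

namespace ZMod

theorem isLocalHom_castHom_prime_pow {p k : ℕ} [Fact p.Prime] (hk : k ≠ 0) :
    IsLocalHom (castHom (dvd_pow_self p hk) (ZMod p)) := by
  have : NeZero (p ^ k) := ⟨pow_ne_zero k (Fact.out : p.Prime).ne_zero⟩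
  refine ⟨fun x hx => ?_⟩
  have hx0 : (x.val : ZMod p) ≠ 0 := by rw [natCast_val, ← castHom_apply]; exact hx.ne_zero
  rw [← natCast_zmod_val x, isUnit_natCast_iff_not_dvd_pow Fact.out (Nat.pos_of_ne_zero hk)]
  rwa [Ne, natCast_eq_zero_iff] at hx0

variable {n : ℕ}

def electricMap (t : ZMod n × ZMod n × ZMod n) : ZMod n × ZMod n × ZMod n :=
  let w := t.1 + t.2.2 + t.1 * t.2.1 * t.2.2
  (t.1 * t.2.1 * w⁻¹, w, t.2.1 * t.2.2 * w⁻¹)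

theorem electricMap_electricMap {x y z : ZMod n} (hw : IsUnit (x + z + x * y * z))
    (hy : IsUnit y) : electricMap (electricMap (x, y, z)) = (x, y, z) := by
  have hw1 := mul_inv_of_unit _ hw
  have hy1 := mul_inv_of_unit _ hy
  have hmiddle : x * y * (x + z + x * y * z)⁻¹ + y * z * (x + z + x * y * z)⁻¹ +
      x * y * (x + z + x * y * z)⁻¹ * (x + z + x * y * z) *
        (y * z * (x + z + x * y * z)⁻¹) = y := by
    linear_combination (y + x * y * y * z * (x + z + x * y * z)⁻¹) * hw1
  simp only [electricMap, hmiddle, Prod.mk.injEq, true_and]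
  constructor
  · linear_combination (x * y * y⁻¹) * hw1 + x * hy1
  · linear_combination (z * y * y⁻¹) * hw1 + z * hy1

section Reduction

variable {F : Type*} [CommRing F] (f : ZMod n →+* F) [IsLocalHom f] {ε : F}

theorem isUnit_of_map_eq {x : ZMod n} (hε : ε ^ 2 = -1) (hx : f x = ε) : IsUnit x :=
  .of_map f x (hx ▸ isUnit_of_sq_eq_neg_one hε)

theorem map_inv_of_map_eq {x : ZMod n} (hε : ε ^ 2 = -1) (hx : f x = ε) : f x⁻¹ = -ε := by
  have h := congrArg f (mul_inv_of_unit x (isUnit_of_map_eq f hε hx))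
  rw [map_mul, map_one, hx] at h
  linear_combination -ε * h + f x⁻¹ * hε

theorem map_electricMap {x y z : ZMod n} (hε : ε ^ 2 = -1) (hx : f x = ε) (hy : f y = ε)
    (hz : f z = ε) :
    f (electricMap (x, y, z)).1 = ε ∧ f (electricMap (x, y, z)).2.1 = ε ∧
      f (electricMap (x, y, z)).2.2 = ε := by
  have hw := map_add_add_mul_mul f hε hx hy hz
  have hw_inv := map_inv_of_map_eq f hε hw
  refine ⟨?_, hw, ?_⟩
  · simp only [electricMap, map_mul, hx, hy, hw_inv]
    linear_combination -ε * hε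
  · simp only [electricMap, map_mul, hy, hz, hw_inv]
    linear_combination -ε * hε

end Reduction

end ZMod

/-- Let `p` be a prime with `p ≡ 1 (mod 4)` or `p = 2`, let `k ≥ 2`, and let
`ε ∈ ℤ/pℤ` satisfy `ε² = −1`.  On the subset `X ⊆ ℤ/p^kℤ` of elements reducing to `ε`
modulo `p`: (1) the denominator `w = x + z + xyz` of the electric map is a unit;
(2) the electric map `(x,y,z) ↦ (xy·w⁻¹, w, yz·w⁻¹)` sends `X³` into `X³`; and
(3) it restricts to a bijection of `X³` onto itself. -/
theorem stmt18 (p : ℕ) (hp : p.Prime)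
    (k : ℕ) (hk : 2 ≤ k) (ε : ZMod p) (hε : ε ^ 2 = -1)
    (red : ZMod (p ^ k) →+* ZMod p)
    (hred : red = ZMod.castHom (dvd_pow_self p (by omega : k ≠ 0)) (ZMod p)) :
    (∀ x y z : ZMod (p ^ k), red x = ε → red y = ε → red z = ε →
      IsUnit (x + z + x * y * z) ∧
      red (x * y * (x + z + x * y * z)⁻¹) = ε ∧
      red (x + z + x * y * z) = ε ∧
      red (y * z * (x + z + x * y * z)⁻¹) = ε) ∧
    (∃ R : {t : ZMod (p ^ k) × ZMod (p ^ k) × ZMod (p ^ k) //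
              red t.1 = ε ∧ red t.2.1 = ε ∧ red t.2.2 = ε} →
           {t : ZMod (p ^ k) × ZMod (p ^ k) × ZMod (p ^ k) //
              red t.1 = ε ∧ red t.2.1 = ε ∧ red t.2.2 = ε},
      Function.Bijective R ∧
      ∀ t, (R t).val.1
              = t.val.1 * t.val.2.1 *
                  (t.val.1 + t.val.2.2 + t.val.1 * t.val.2.1 * t.val.2.2)⁻¹ ∧
           (R t).val.2.1
              = t.val.1 + t.val.2.2 + t.val.1 * t.val.2.1 * t.val.2.2 ∧
           (R t).val.2.2
              = t.val.2.1 * t.val.2.2 *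
                  (t.val.1 + t.val.2.2 + t.val.1 * t.val.2.1 * t.val.2.2)⁻¹) := by
  have : Fact p.Prime := ⟨hp⟩
  have : IsLocalHom red := hred ▸ ZMod.isLocalHom_castHom_prime_pow (by omega)
  have hunit {x y z : ZMod (p ^ k)} (hx : red x = ε) (hy : red y = ε) (hz : red z = ε) :
      IsUnit (x + z + x * y * z) :=
    ZMod.isUnit_of_map_eq red hε (map_add_add_mul_mul red hε hx hy hz)
  refine ⟨fun x y z hx hy hz => ⟨hunit hx hy hz, ZMod.map_electricMap red hε hx hy hz⟩,
    fun t => ⟨ZMod.electricMap t.1, ZMod.map_electricMap red hε t.2.1 t.2.2.1 t.2.2.2⟩, ?_,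
    fun t => ⟨rfl, rfl, rfl⟩⟩
  refine Function.Involutive.bijective fun ⟨(x, y, z), hx, hy, hz⟩ => Subtype.ext ?_
  exact ZMod.electricMap_electricMap (hunit hx hy hz) (ZMod.isUnit_of_map_eq red hε hy)
end
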